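/- (Uniform L² dissipativity via differential inequality) Let p > 2, c > 0, L > 0, and let y : [0,∞) → [0,∞) be absolutely continuous satisfying y'(t) + 2c·y(t)^{p/2} ≤ 2L·y(t) for a.e. t > 0. Then there exist constants T > 0 and β > 0, depending only on p, c, L (not on y(0)), such that y(t) ≤ β for all t ≥ T. -/

import Mathlib

/-!
Write `q = p/2 - 1` and `M = (2L/c)^(1/q)`. Wherever `y ≥ M` the damping dominates,
`2L y ≤ c y^(q+1)`, so `y' ≤ -c y^(q+1)`; in particular `y' < 0` on the level `y = M`, which
therefore is never crossed upwards. On `[t/2, t]` either `y` reaches the level `M`, and then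
`y t ≤ M`, or `y > M` throughout, and then the Bernoulli substitution `u = y^(-q)` turns the
differential inequality into `u' ≥ q c`, which forces `y t^(-q) ≥ q c t/2 ≥ M^(-q)` as soon as
`t ≥ 1/(q L)`.
-/

open Real Set

lemma mul_le_mul_rpow_add_one_of_le {q c K y : ℝ} (hq : 0 < q) (hc : 0 < c) (hK : 0 ≤ K)
    (hy : (K / c) ^ q⁻¹ ≤ y) : K * y ≤ c * y ^ (q + 1) := by
  have hy0 : 0 ≤ y := le_trans (by positivity) hy
  have hyq : K / c ≤ y ^ q :=
    calc K / c = ((K / c) ^ q⁻¹) ^ q := by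
          rw [← rpow_mul (by positivity), inv_mul_cancel₀ hq.ne', rpow_one]
      _ ≤ y ^ q := rpow_le_rpow (by positivity) hy hq.le
  calc K * y = c * (K / c) * y := by field_simp
    _ ≤ c * y ^ q * y := by gcongr
    _ = c * y ^ (q + 1) := by rw [rpow_add' hy0 (by linarith), rpow_one, mul_assoc]

theorem rpow_neg_add_le_of_deriv_le {y y' : ℝ → ℝ} {a b q c : ℝ} (hq : 0 < q) (hab : a ≤ b)
    (hy : ∀ x ∈ Icc a b, HasDerivAt y (y' x) x) (hpos : ∀ x ∈ Icc a b, 0 < y x)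
    (hy' : ∀ x ∈ Ioo a b, y' x ≤ -c * y x ^ (q + 1)) :
    y a ^ (-q) + q * c * (b - a) ≤ y b ^ (-q) := by
  have hu : ∀ x ∈ Icc a b,
      HasDerivAt (fun x ↦ y x ^ (-q) - q * c * x) (y' x * -q * y x ^ (-q - 1) - q * c) x :=
    fun x hx ↦ ((hy x hx).rpow_const (Or.inl (hpos x hx).ne')).sub
      ((hasDerivAt_id x).const_mul (q * c) |>.congr_deriv (mul_one _))
  have hmono : MonotoneOn (fun x ↦ y x ^ (-q) - q * c * x) (Icc a b) := by
    refine monotoneOn_of_deriv_nonneg (convex_Icc a b)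
      (fun x hx ↦ (hu x hx).continuousAt.continuousWithinAt)
      (fun x hx ↦ ?_) (fun x hx ↦ ?_) <;> rw [interior_Icc] at hx
    · exact (hu x (Ioo_subset_Icc_self hx)).differentiableAt.differentiableWithinAt
    · have hyx := hpos x (Ioo_subset_Icc_self hx)
      have hcancel : y x ^ (q + 1) * y x ^ (-q - 1) = 1 := by
        rw [← rpow_add hyx, show q + 1 + (-q - 1) = 0 by ring, rpow_zero]
      have hdecay : y' x * y x ^ (-q - 1) ≤ -c :=
        calc y' x * y x ^ (-q - 1) ≤ -c * y x ^ (q + 1) * y x ^ (-q - 1) := by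
              gcongr; exact hy' x hx
          _ = -c := by rw [mul_assoc, hcancel, mul_one]
      rw [(hu x (Ioo_subset_Icc_self hx)).deriv]
      nlinarith
  have := hmono (left_mem_Icc.2 hab) (right_mem_Icc.2 hab) hab
  simp only at this
  linarith

theorem le_of_deriv_neg_on_level {y y' : ℝ → ℝ} {a b M : ℝ} (hab : a ≤ b)
    (hy : ∀ x ∈ Icc a b, HasDerivAt y (y' x) x) (ha : y a ≤ M)
    (hlevel : ∀ x ∈ Ico a b, y x = M → y' x < 0) : y b ≤ M :=
  image_le_of_deriv_right_lt_deriv_boundary (B' := fun _ ↦ 0)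
    (fun x hx ↦ (hy x hx).continuousAt.continuousWithinAt)
    (fun x hx ↦ (hy x (Ico_subset_Icc_self hx)).hasDerivWithinAt) ha
    (fun _ ↦ hasDerivAt_const _ M) hlevel (right_mem_Icc.2 hab)

/-- Uniform L² dissipativity: if `y' + 2c y^{p/2} ≤ 2L y` with `p > 2`, then
there are `T, β > 0` depending only on `p, c, L` (not on `y(0)`) with
`y(t) ≤ β` for all `t ≥ T`. -/
theorem stmt_4 (p c L : ℝ) (hp : 2 < p) (hc : 0 < c) (hL : 0 < L) :
    ∃ T β : ℝ, 0 < T ∧ 0 < β ∧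
      ∀ (y y' : ℝ → ℝ),
        (∀ t, 0 ≤ t → HasDerivAt y (y' t) t) →
        (∀ t, 0 ≤ t → 0 ≤ y t) →
        (∀ t, 0 < t → y' t + 2 * c * (y t) ^ (p / 2) ≤ 2 * L * y t) →
        ∀ t, T ≤ t → y t ≤ β := by
  set q := p / 2 - 1
  have hq : 0 < q := by simp only [q]; linarith
  set M := (2 * L / c) ^ q⁻¹
  have hM : 0 < M := by positivity
  have hMq : M ^ (-q) = c / (2 * L) := by
    rw [← rpow_mul (by positivity), inv_mul_eq_div, neg_div, div_self hq.ne', rpow_neg_one,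
      inv_div]
  refine ⟨1 / (q * L), M, by positivity, hM, fun y y' hy _ hineq t ht ↦ ?_⟩
  have ht0 : 0 < t := lt_of_lt_of_le (by positivity) ht
  have hdecay : ∀ r, 0 < r → M ≤ y r → y' r ≤ -c * y r ^ (q + 1) := fun r hr hMr ↦ by
    have hr := hineq r hr
    rw [show p / 2 = q + 1 by ring] at hr
    linarith [mul_le_mul_rpow_add_one_of_le hq hc (by positivity : 0 ≤ 2 * L) hMr]
  by_cases hdip : ∃ s ∈ Icc (t / 2) t, y s ≤ M
  · obtain ⟨s, hs, hys⟩ := hdip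
    refine le_of_deriv_neg_on_level hs.2 (fun x hx ↦ hy x (by linarith [hx.1, hs.1])) hys
      fun x hx hyx ↦ ?_
    have hdamp : 0 < c * y x ^ (q + 1) := by rw [hyx]; positivity
    linarith [hdecay x (by linarith [hx.1, hs.1]) hyx.ge]
  · push Not at hdip
    have hhalf : t / 2 ≤ t := half_le_self ht0.le
    have hbound := rpow_neg_add_le_of_deriv_le hq hhalf
      (fun x hx ↦ hy x (by linarith [hx.1])) (fun x hx ↦ hM.trans (hdip x hx))
      (fun x hx ↦ hdecay x (by linarith [hx.1]) (hdip x (Ioo_subset_Icc_self hx)).le)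
    have hyt : 0 < y t := hM.trans (hdip t (right_mem_Icc.2 hhalf))
    have hyhalf := rpow_nonneg (hM.trans (hdip _ (left_mem_Icc.2 hhalf))).le (-q)
    have hqLt : 1 ≤ t * (q * L) := by rwa [div_le_iff₀ (by positivity)] at ht
    have hgain : c / (2 * L) ≤ q * c * (t - t / 2) := by
      rw [div_le_iff₀ (by positivity)]; nlinarith
    rw [← rpow_le_rpow_iff_of_neg hM hyt (neg_lt_zero.2 hq), hMq]
    linarith
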